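/- Let a > 0, τ ∈ (0,1), d > 0, and let φ ∈ C([−1,0]) satisfy φ(t) < 0 for t ∈ [−1,−τ), φ(−τ) = 0, φ(t) > 0 for t ∈ (−τ,0), and φ(0) = d. If x : [−1,∞) → ℝ is a solution of the relay equation ẋ(t) = R(x(t−1)) with initial function φ, then x(t) = x0(t − ((1−τ)t0 + d/a + a + 1)) for all t ≥ (1−τ)t0 + d/a, where x0 is extended T0-periodically to all of ℝ. -/

import Mathlib

/-!
Between two sign changes of `x(t - 1)` a solution is affine with slope `1` or `-a`, and
by the method of steps each affine piece persists as long as the delayed value keeps its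
sign. Starting from `φ`, the solution rises with slope `1` on `[0, 1 - τ]` and then falls
with slope `-a` until it reaches `0` at `z = (1 - τ) t0 + d / a`, having been positive on
`(z - 1, z)`. From any such downward zero `p` the same reasoning forces three pieces
(slopes `-a`, `1`, `-a`) that trace exactly one period of `x0` and end at a new downward
zero `p + T0`; hence `x(t) = x0(t - z + t0)` for `t ≥ z`, and `t0 - T0 = -(a + 1)`.
-/

/-- The relay nonlinearity: `R a x = 1` if `x ≤ 0`, and `R a x = -a` if `x > 0`. -/
noncomputable def R (a x : ℝ) : ℝ := if x ≤ 0 then 1 else -a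

/-- `x : [-1,∞) → ℝ` is a solution of the relay equation `x'(t) = R a (x (t-1))`
with initial function `φ ∈ C([-1,0])`: `x` is continuous on `[-1,∞)`, coincides
with `φ` on `[-1,0]`, and for every `t > 0` outside an exceptional set having
finitely many points in each bounded interval, `x` is differentiable at `t` with
`x'(t) = R a (x (t-1))`. -/
def IsSolution (a : ℝ) (φ x : ℝ → ℝ) : Prop :=
  ContinuousOn x (Set.Ici (-1 : ℝ)) ∧
  (∀ t ∈ Set.Icc (-1 : ℝ) 0, x t = φ t) ∧
  ∃ S : Set ℝ, (∀ A B : ℝ, (S ∩ Set.Icc A B).Finite) ∧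
    ∀ t : ℝ, 0 < t → t ∉ S → HasDerivAt x (R a (x (t - 1))) t

open Set

lemma R_of_nonpos {a y : ℝ} (hy : y ≤ 0) : R a y = 1 := if_pos hy

lemma R_of_pos {a y : ℝ} (hy : 0 < y) : R a y = -a := if_neg hy.not_ge

lemma Set.Countable.of_finite_inter_Icc {S : Set ℝ} (hS : ∀ A B : ℝ, (S ∩ Icc A B).Finite) :
    S.Countable := by
  have hcover : S = ⋃ n : ℕ, S ∩ Icc (-n : ℝ) n := by
    refine (Set.iUnion_subset fun _ => inter_subset_left).antisymm' fun t ht => ?_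
    obtain ⟨n, hn⟩ := exists_nat_ge |t|
    exact mem_iUnion.2 ⟨n, ht, abs_le.1 hn⟩
  rw [hcover]
  exact countable_iUnion fun n => (hS _ _).countable

lemma eq_add_mul_sub_of_hasDerivAt_off_countable {f : ℝ → ℝ} {c A B : ℝ} {s : Set ℝ}
    (hs : s.Countable) (hcont : ContinuousOn f (Icc A B))
    (hderiv : ∀ t ∈ Ioo A B \ s, HasDerivAt f c t) :
    ∀ t ∈ Icc A B, f t = f A + c * (t - A) := by
  intro t ht
  have hftc := MeasureTheory.integral_eq_of_hasDerivAt_off_countable_of_le f (fun _ => c) ht.1 hs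
    (hcont.mono (Icc_subset_Icc_right ht.2))
    (fun u hu => hderiv u ⟨⟨hu.1.1, hu.1.2.trans_le ht.2⟩, hu.2⟩) intervalIntegrable_const
  rw [intervalIntegral.integral_const, smul_eq_mul] at hftc
  linarith

variable {a : ℝ} {φ x : ℝ → ℝ}

/-- The method of steps: `x (t - 1)` is known either from the past (`t - 1 < A`) or from
the affine piece itself, which is established on successive intervals of length `1`. -/
theorem IsSolution.eq_affine (hx : IsSolution a φ x) {A B c : ℝ} (hA : 0 ≤ A) (hAB : A ≤ B)
    (hpast : ∀ t ∈ Ioo A B, t - 1 < A → R a (x (t - 1)) = c)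
    (hself : ∀ s ∈ Ico A (B - 1), R a (x A + c * (s - A)) = c) :
    ∀ t ∈ Icc A B, x t = x A + c * (t - A) := by
  obtain ⟨hcont, -, S, hS, hderiv⟩ := hx
  suffices hsteps : ∀ n : ℕ, ∀ t ∈ Icc A (min B (A + n)), x t = x A + c * (t - A) from
    fun t ht => hsteps ⌈B - A⌉₊ t ⟨ht.1, le_min ht.2 (by linarith [ht.2, Nat.le_ceil (B - A)])⟩
  intro n
  induction n with
  | zero =>
    intro t ht
    obtain rfl : t = A := le_antisymm (by simpa using ht.2.trans (min_le_right _ _)) ht.1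
    simp
  | succ n ih =>
    refine eq_add_mul_sub_of_hasDerivAt_off_countable (Countable.of_finite_inter_Icc hS)
      (hcont.mono fun t ht => by simp only [mem_Ici]; linarith [ht.1]) fun t ⟨ht, htS⟩ => ?_
    have htB : t < B := ht.2.trans_le (min_le_left _ _)
    have hRc : R a (x (t - 1)) = c := by
      rcases lt_or_ge (t - 1) A with hlt | hge
      · exact hpast t ⟨ht.1, htB⟩ hlt
      · have htn : t - 1 ≤ min B (A + n) := by
          have := ht.2.le.trans (min_le_right _ _); push_cast at this
          exact le_min (by linarith) (by linarith)
        rw [ih (t - 1) ⟨hge, htn⟩]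
        exact hself (t - 1) ⟨hge, by linarith⟩
    exact hRc ▸ hderiv t (by linarith [ht.1]) htS

def IsDownwardZero (x : ℝ → ℝ) (p : ℝ) : Prop :=
  x p = 0 ∧ ∀ s ∈ Ioo (p - 1) p, 0 < x s

theorem IsSolution.isDownwardZero_start (hx : IsSolution a φ x) (ha : 0 < a) {τ d t0 : ℝ}
    (hat0 : a * t0 = a + 1) (hτ : τ ∈ Ioo 0 1) (hd : 0 < d)
    (hφ1 : ∀ t ∈ Ico (-1 : ℝ) (-τ), φ t < 0) (hφ2 : ∀ t ∈ Ioo (-τ) 0, 0 < φ t) (hφ0 : φ 0 = d) :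
    IsDownwardZero x ((1 - τ) * t0 + d / a) := by
  obtain ⟨hτ0, hτ1⟩ := hτ
  have hxφ := hx.2.1
  set z := (1 - τ) * t0 + d / a with hz
  have hza : a * z = (1 - τ) * (a + 1) + d := by
    rw [hz, mul_add, mul_div_cancel₀ _ ha.ne', ← hat0]; ring
  clear_value z
  have hz1 : 1 - τ < z := by nlinarith
  have hrise : ∀ t ∈ Icc 0 (1 - τ), x t = d + t := by
    have := hx.eq_affine (A := 0) (B := 1 - τ) (c := 1) le_rfl (by linarith)
      (fun t ht _ => R_of_nonpos (by
        rw [hxφ (t - 1) ⟨by linarith [ht.1], by linarith [ht.2]⟩]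
        exact (hφ1 _ ⟨by linarith [ht.1], by linarith [ht.2]⟩).le))
      (fun s hs => absurd hs.2 (by linarith [hs.1]))
    intro t ht
    rw [this t ht, hxφ 0 ⟨by norm_num, le_rfl⟩, hφ0]
    ring
  have hpos : ∀ s ∈ Ioc (-τ) (1 - τ), 0 < x s := by
    intro s hs
    rcases lt_or_ge s 0 with hneg | hnonneg
    · rw [hxφ s ⟨by linarith [hs.1], hneg.le⟩]
      exact hφ2 s ⟨hs.1, hneg⟩
    · rw [hrise s ⟨hnonneg, hs.2⟩]
      linarith
  have hfall : ∀ t ∈ Icc (1 - τ) z, x t = -a * (t - z) := by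
    have := hx.eq_affine (A := 1 - τ) (B := z) (c := -a) (by linarith) hz1.le
      (fun t ht hlt => R_of_pos (hpos (t - 1) ⟨by linarith [ht.1], hlt.le⟩))
      (fun s hs => R_of_pos (by
        rw [hrise (1 - τ) ⟨by linarith, le_rfl⟩]
        nlinarith [mul_lt_mul_of_pos_left hs.2 ha]))
    intro t ht
    rw [this t ht, hrise (1 - τ) ⟨by linarith, le_rfl⟩]
    linear_combination -hza
  refine ⟨by rw [hfall z ⟨hz1.le, le_rfl⟩]; ring, fun s hs => ?_⟩
  rcases le_or_gt s (1 - τ) with hle | hgt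
  · exact hpos s ⟨by linarith [hs.1], hle⟩
  · rw [hfall s ⟨hgt.le, hs.2.le⟩]
    exact mul_pos_of_neg_of_neg (neg_lt_zero.2 ha) (sub_neg.2 hs.2)

theorem IsSolution.eq_pieces_of_isDownwardZero (hx : IsSolution a φ x) (ha : 0 < a) {t0 p : ℝ}
    (hat0 : a * t0 = a + 1) (hp : 0 ≤ p) (hz : IsDownwardZero x p) :
    (∀ t ∈ Icc p (p + 1), x t = -a * (t - p)) ∧
    (∀ t ∈ Icc (p + 1) (p + a + 2), x t = t - (p + a + 1)) ∧
    (∀ t ∈ Icc (p + a + 2) (p + (t0 + a + 1)), x t = -a * (t - (p + (t0 + a + 1)))) := by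
  obtain ⟨hzero, hpos⟩ := hz
  have ht0 : 1 < t0 := by nlinarith
  have hfall : ∀ t ∈ Icc p (p + 1), x t = -a * (t - p) := by
    have := hx.eq_affine (A := p) (B := p + 1) (c := -a) hp (by linarith)
      (fun t ht _ => R_of_pos (hpos _ ⟨by linarith [ht.1], by linarith [ht.2]⟩))
      (fun s hs => absurd hs.2 (by linarith [hs.1]))
    intro t ht
    rw [this t ht, hzero]
    ring
  have hrise : ∀ t ∈ Icc (p + 1) (p + a + 2), x t = t - (p + a + 1) := by
    have := hx.eq_affine (A := p + 1) (B := p + a + 2) (c := 1) (by linarith)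
      (by linarith)
      (fun t ht hlt => R_of_nonpos (by
        rw [hfall (t - 1) ⟨by linarith [ht.1], hlt.le⟩]
        nlinarith [ht.1]))
      (fun s hs => R_of_nonpos (by
        rw [hfall (p + 1) ⟨by linarith, le_rfl⟩]
        linarith [hs.2]))
    intro t ht
    rw [this t ht, hfall (p + 1) ⟨by linarith, le_rfl⟩]
    ring
  have hfall' : ∀ t ∈ Icc (p + a + 2) (p + (t0 + a + 1)), x t = -a * (t - (p + (t0 + a + 1))) := by
    have := hx.eq_affine (A := p + a + 2) (B := p + (t0 + a + 1)) (c := -a)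
      (by linarith) (by linarith)
      (fun t ht hlt => R_of_pos (by
        rw [hrise (t - 1) ⟨by linarith [ht.1], hlt.le⟩]
        linarith [ht.1]))
      (fun s hs => R_of_pos (by
        rw [hrise (p + a + 2) ⟨by linarith, le_rfl⟩]
        nlinarith [mul_lt_mul_of_pos_left (show s - (p + a + 2) < t0 - 2 by linarith [hs.2]) ha]))
    intro t ht
    rw [this t ht, hrise (p + a + 2) ⟨by linarith, le_rfl⟩]
    linear_combination -hat0
  exact ⟨hfall, hrise, hfall'⟩

theorem IsSolution.eq_x0_of_isDownwardZero (hx : IsSolution a φ x) (ha : 0 < a) {t0 p : ℝ}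
    (hat0 : a * t0 = a + 1) {x0 : ℝ → ℝ} (hx0per : Function.Periodic x0 (t0 + a + 1))
    (hx0a : ∀ t ∈ Icc (0 : ℝ) 1, x0 t = t)
    (hx0b : ∀ t ∈ Icc (1 : ℝ) (t0 + 1), x0 t = -a * (t - t0))
    (hx0c : ∀ t ∈ Icc (t0 + 1) (t0 + a + 1), x0 t = t - (t0 + a + 1))
    (hp : 0 ≤ p) (hz : IsDownwardZero x p) :
    (∀ t ∈ Icc p (p + (t0 + a + 1)), x t = x0 (t - p + t0)) ∧
      IsDownwardZero x (p + (t0 + a + 1)) := by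
  obtain ⟨hfall, hrise, hfall'⟩ := hx.eq_pieces_of_isDownwardZero ha hat0 hp hz
  have ht0 : 1 < t0 := by nlinarith
  have hshift : ∀ t, x0 (t - p + t0) = x0 (t - (p + a + 1)) := fun t => by
    rw [← hx0per (t - (p + a + 1))]; ring_nf
  refine ⟨fun t ht => ?_, ?_, fun s hs => ?_⟩
  · rcases le_or_gt t (p + 1) with h1 | h1
    · rw [hfall t ⟨ht.1, h1⟩, hx0b _ ⟨by linarith [ht.1], by linarith⟩]
      ring
    rcases le_or_gt t (p + a + 1) with h2 | h2
    · rw [hrise t ⟨h1.le, by linarith⟩, hx0c _ ⟨by linarith, by linarith⟩]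
      ring
    rcases le_or_gt t (p + a + 2) with h3 | h3
    · rw [hrise t ⟨h1.le, h3⟩, hshift, hx0a _ ⟨by linarith, by linarith⟩]
    · rw [hfall' t ⟨h3.le, ht.2⟩, hshift, hx0b _ ⟨by linarith, by linarith [ht.2]⟩]
      ring
  · rw [hfall' _ ⟨by linarith, le_rfl⟩]
    ring
  · rcases le_or_gt s (p + a + 2) with h | h
    · rw [hrise s ⟨by linarith [hs.1], h⟩]
      linarith [hs.1]
    · rw [hfall' s ⟨h.le, hs.2.le⟩]
      exact mul_pos_of_neg_of_neg (neg_lt_zero.2 ha) (sub_neg.2 hs.2)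

theorem IsSolution.eq_x0_of_le (hx : IsSolution a φ x) (ha : 0 < a) {t0 p : ℝ}
    (hat0 : a * t0 = a + 1) {x0 : ℝ → ℝ} (hx0per : Function.Periodic x0 (t0 + a + 1))
    (hx0a : ∀ t ∈ Icc (0 : ℝ) 1, x0 t = t)
    (hx0b : ∀ t ∈ Icc (1 : ℝ) (t0 + 1), x0 t = -a * (t - t0))
    (hx0c : ∀ t ∈ Icc (t0 + 1) (t0 + a + 1), x0 t = t - (t0 + a + 1))
    (hp : 0 ≤ p) (hz : IsDownwardZero x p) :
    ∀ t, p ≤ t → x t = x0 (t - p + t0) := by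
  set T := t0 + a + 1
  have hTpos : 0 < T := by nlinarith
  have hperiod := fun q (hq : 0 ≤ q) =>
    hx.eq_x0_of_isDownwardZero ha hat0 hx0per hx0a hx0b hx0c (p := q) hq
  have hzeros : ∀ n : ℕ, IsDownwardZero x (p + n * T) := by
    intro n
    induction n with
    | zero => simpa using hz
    | succ n ih =>
      have := (hperiod _ (by positivity) ih).2
      rwa [Nat.cast_succ, add_one_mul, ← add_assoc]
  intro t ht
  set n := ⌊(t - p) / T⌋₊
  have hn : n * T ≤ t - p := (le_div_iff₀ hTpos).1 (Nat.floor_le (div_nonneg (by linarith) hTpos.le))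
  have hn' : t - p < (n + 1) * T := (div_lt_iff₀ hTpos).1 (Nat.lt_floor_add_one _)
  rw [(hperiod _ (by positivity) (hzeros n)).1 t ⟨by linarith, by linarith⟩,
    show t - (p + n * T) + t0 = t - p + t0 - n * T by ring, hx0per.sub_nat_mul_eq]

theorem stmt_4_general (a : ℝ) (ha : 0 < a) (τ : ℝ) (hτ : τ ∈ Set.Ioo (0 : ℝ) 1)
    (d : ℝ) (hd : 0 < d) (t0 T0 : ℝ)
    (ht0 : t0 = (a + 1) / a) (hT0 : T0 = (a + 1) ^ 2 / a)
    (φ : ℝ → ℝ)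
    (hφ1 : ∀ t ∈ Set.Ico (-1 : ℝ) (-τ), φ t < 0)
    (hφ2 : ∀ t ∈ Set.Ioo (-τ) (0 : ℝ), 0 < φ t) (hφ0 : φ 0 = d)
    (x : ℝ → ℝ) (hx : IsSolution a φ x)
    (x0 : ℝ → ℝ)
    (hx0per : ∀ t : ℝ, x0 (t + T0) = x0 t)
    (hx0a : ∀ t ∈ Set.Icc (0 : ℝ) 1, x0 t = t)
    (hx0b : ∀ t ∈ Set.Icc (1 : ℝ) (t0 + 1), x0 t = -a * (t - t0))
    (hx0c : ∀ t ∈ Set.Icc (t0 + 1) T0, x0 t = t - T0) :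
    ∀ t : ℝ, (1 - τ) * t0 + d / a ≤ t →
      x t = x0 (t - ((1 - τ) * t0 + d / a + a + 1)) := by
  intro t ht
  have hat0 : a * t0 = a + 1 := by rw [ht0, mul_div_cancel₀ _ ha.ne']
  obtain rfl : T0 = t0 + a + 1 := by rw [hT0, ht0]; field_simp; ring
  have hstart := hx.isDownwardZero_start ha hat0 hτ hd hφ1 hφ2 hφ0
  have hz0 : 0 ≤ (1 - τ) * t0 + d / a := by
    rw [ht0]
    exact add_nonneg (mul_nonneg (by linarith [hτ.2]) (by positivity)) (by positivity)
  rw [hx.eq_x0_of_le ha hat0 hx0per hx0a hx0b hx0c hz0 hstart t ht,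
    ← hx0per (t - ((1 - τ) * t0 + d / a + a + 1))]
  ring_nf

/-- a solution with an initial function negative on `[-1,-τ)`,
vanishing at `-τ`, positive on `(-τ,0)` with `φ(0) = d > 0`, coincides with
`x0 (t - ((1-τ)t0 + d/a + a + 1))` for all `t ≥ (1-τ)t0 + d/a`. -/
theorem stmt_4 (a : ℝ) (ha : 0 < a) (τ : ℝ) (hτ : τ ∈ Set.Ioo (0 : ℝ) 1)
    (d : ℝ) (hd : 0 < d) (t0 T0 : ℝ)
    (ht0 : t0 = (a + 1) / a) (hT0 : T0 = (a + 1) ^ 2 / a)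
    (φ : ℝ → ℝ) (hφc : ContinuousOn φ (Set.Icc (-1 : ℝ) 0))
    (hφ1 : ∀ t ∈ Set.Ico (-1 : ℝ) (-τ), φ t < 0) (hφτ : φ (-τ) = 0)
    (hφ2 : ∀ t ∈ Set.Ioo (-τ) (0 : ℝ), 0 < φ t) (hφ0 : φ 0 = d)
    (x : ℝ → ℝ) (hx : IsSolution a φ x)
    (x0 : ℝ → ℝ)
    (hx0per : ∀ t : ℝ, x0 (t + T0) = x0 t)
    (hx0a : ∀ t ∈ Set.Icc (0 : ℝ) 1, x0 t = t)
    (hx0b : ∀ t ∈ Set.Icc (1 : ℝ) (t0 + 1), x0 t = -a * (t - t0))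
    (hx0c : ∀ t ∈ Set.Icc (t0 + 1) T0, x0 t = t - T0) :
    ∀ t : ℝ, (1 - τ) * t0 + d / a ≤ t →
      x t = x0 (t - ((1 - τ) * t0 + d / a + a + 1)) :=
  stmt_4_general a ha τ hτ d hd t0 T0 ht0 hT0 φ hφ1 hφ2 hφ0 x hx x0 hx0per hx0a hx0b hx0c
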